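/- In the annulus 1 ≤ x²+y² ≤ 16, the five fields G, C, h_n, h_t, η of the exact decomposition above are pairwise L²-orthogonal: ∫_M G·C = ∫_M G·h_n = ∫_M G·h_t = ∫_M G·η = ∫_M C·h_n = ∫_M C·h_t = ∫_M C·η = ∫_M h_n·h_t = ∫_M h_n·η = ∫_M h_t·η = 0. -/

import Mathlib

open MeasureTheory

noncomputable def cAnn : ℝ := 15 / Real.log 4

/-- The annulus 1 ≤ x²+y² ≤ 16. -/
def annulus : Set (ℝ × ℝ) :=
  {p | 1 ≤ p.1 ^ 2 + p.2 ^ 2 ∧ p.1 ^ 2 + p.2 ^ 2 ≤ 16}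

noncomputable def Gf (p : ℝ × ℝ) : ℝ × ℝ :=
  (2 * p.1 - cAnn * p.1 / (p.1 ^ 2 + p.2 ^ 2),
   2 * p.2 - cAnn * p.2 / (p.1 ^ 2 + p.2 ^ 2))

noncomputable def Cf (p : ℝ × ℝ) : ℝ × ℝ :=
  (-(2 * p.2) + cAnn * p.2 / (p.1 ^ 2 + p.2 ^ 2),
   2 * p.1 - cAnn * p.1 / (p.1 ^ 2 + p.2 ^ 2))

noncomputable def hnf (p : ℝ × ℝ) : ℝ × ℝ :=
  (cAnn * p.1 / (p.1 ^ 2 + p.2 ^ 2), cAnn * p.2 / (p.1 ^ 2 + p.2 ^ 2))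

noncomputable def htf (p : ℝ × ℝ) : ℝ × ℝ :=
  (cAnn * (-p.2) / (p.1 ^ 2 + p.2 ^ 2), cAnn * p.1 / (p.1 ^ 2 + p.2 ^ 2))

noncomputable def etaf (_ : ℝ × ℝ) : ℝ × ℝ := (1, 1)

/-- Euclidean dot product on ℝ². -/
def dot2 (a b : ℝ × ℝ) : ℝ := a.1 * b.1 + a.2 * b.2

/-! G and h_n are radial fields, C and h_t are their rotations by a right angle, so the four
cross pairings G·C, G·h_t, C·h_n, h_n·h_t vanish pointwise. All four fields are odd, so their
pairing with the constant field η is an odd function, whose integral over the symmetric annulus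
vanishes. The remaining pairings G·h_n and C·h_t both equal 2c − c²/s with s = x² + y², and in
polar coordinates (ds = 2r dr) their integral is π ∫₁¹⁶ (2c − c²/s) ds = π c (30 − c log 16),
which is zero exactly because c = 15 / log 4. -/

open Set Real

theorem setIntegral_eq_zero_of_odd {G E : Type*} [MeasurableSpace G] [InvolutiveNeg G]
    [MeasurableNeg G] [NormedAddCommGroup E] [NormedSpace ℝ E] (μ : Measure G) [μ.IsNegInvariant]
    {s : Set G} (hs : -s = s) {f : G → E} (hf : f.Odd) : ∫ x in s, f x ∂μ = 0 := by
  have h_neg := (Measure.measurePreserving_neg μ).setIntegral_preimage_emb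
    (MeasurableEquiv.neg G).measurableEmbedding f s
  rw [show Neg.neg ⁻¹' s = s from hs] at h_neg
  simp only [hf _, integral_neg] at h_neg
  have h_two : (2 : ℝ) • ∫ x in s, f x ∂μ = 0 := by
    rw [two_smul]; nth_rw 1 [← h_neg]; exact neg_add_cancel _
  simpa using h_two

theorem integral_comp_sq_add_sq {E : Type*} [NormedAddCommGroup E] [NormedSpace ℝ E]
    (g : ℝ → E) : ∫ p : ℝ × ℝ, g (p.1 ^ 2 + p.2 ^ 2) = π • ∫ s in Ioi 0, g s := by
  have h_polar (p : ℝ × ℝ) : (polarCoord.symm p).1 ^ 2 + (polarCoord.symm p).2 ^ 2 = p.1 ^ 2 := by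
    rw [polarCoord_symm_apply]
    linear_combination p.1 ^ 2 * cos_sq_add_sin_sq p.2
  have h_sq : ∫ r in Ioi (0 : ℝ), r • g (r ^ 2) = (1 / 2 : ℝ) • ∫ s in Ioi 0, g s := by
    rw [← integral_comp_rpow_Ioi_of_pos (g := g) two_pos, ← integral_smul]
    congr 1 with r
    norm_num [smul_smul, ← mul_assoc]
  rw [← integral_comp_polarCoord_symm]
  simp_rw [h_polar]
  rw [polarCoord_target, Measure.volume_eq_prod, ← Measure.prod_restrict,
    integral_fun_fst (fun r => r • g (r ^ 2)), measureReal_restrict_apply_univ, volume_real_Ioo,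
    h_sq, smul_smul, max_eq_left (by linarith [pi_pos])]
  congr 1
  ring

theorem setIntegral_preimage_Icc_comp_sq_add_sq {E : Type*} [NormedAddCommGroup E]
    [NormedSpace ℝ E] (g : ℝ → E) {a b : ℝ} (ha : 0 ≤ a) :
    ∫ p in (fun p : ℝ × ℝ => p.1 ^ 2 + p.2 ^ 2) ⁻¹' Icc a b, g (p.1 ^ 2 + p.2 ^ 2) =
      π • ∫ s in Icc a b, g s := by
  have h_meas : MeasurableSet ((fun p : ℝ × ℝ => p.1 ^ 2 + p.2 ^ 2) ⁻¹' Icc a b) :=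
    measurableSet_Icc.preimage (by fun_prop)
  rw [← integral_indicator h_meas]
  have h_ind : ((fun p : ℝ × ℝ => p.1 ^ 2 + p.2 ^ 2) ⁻¹' Icc a b).indicator
      (fun p => g (p.1 ^ 2 + p.2 ^ 2)) = fun p => (Icc a b).indicator g (p.1 ^ 2 + p.2 ^ 2) :=
    funext fun _ => indicator_comp_right _
  rw [h_ind, integral_comp_sq_add_sq, ← integral_Ici_eq_integral_Ioi,
    setIntegral_indicator measurableSet_Icc,
    inter_eq_right.mpr (Icc_subset_Ici_self.trans (Ici_subset_Ici.mpr ha))]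

theorem integral_Icc_two_mul_cAnn_sub_cAnn_sq_div :
    ∫ s in Icc (1 : ℝ) 16, (2 * cAnn - cAnn ^ 2 / s) = 0 := by
  have h_inv : IntervalIntegrable (fun s : ℝ => s⁻¹) volume 1 16 :=
    intervalIntegral.intervalIntegrable_inv (fun s hs => by
      rw [uIcc_of_le (by norm_num)] at hs; linarith [hs.1]) continuousOn_id
  have h_log : log 16 = 2 * log 4 := by
    rw [show (16 : ℝ) = 4 ^ 2 by norm_num, log_pow]; norm_num
  rw [integral_Icc_eq_integral_Ioc, ← intervalIntegral.integral_of_le (by norm_num)]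
  simp_rw [div_eq_mul_inv]
  rw [intervalIntegral.integral_sub intervalIntegrable_const (h_inv.const_mul _),
    intervalIntegral.integral_const, intervalIntegral.integral_const_mul,
    integral_inv_of_pos one_pos (by norm_num), div_one, h_log, cAnn]
  have : log 4 ≠ 0 := (log_pos (by norm_num)).ne'
  simp only [smul_eq_mul]
  field_simp
  ring

theorem measurableSet_annulus : MeasurableSet annulus :=
  measurableSet_Icc.preimage (by fun_prop : Measurable fun p : ℝ × ℝ => p.1 ^ 2 + p.2 ^ 2)

theorem neg_annulus : -annulus = annulus := by
  ext p; simp [annulus]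

theorem setIntegral_annulus_eq_zero {f : ℝ × ℝ → ℝ}
    (hf : ∀ p ∈ annulus, f p = 2 * cAnn - cAnn ^ 2 / (p.1 ^ 2 + p.2 ^ 2)) :
    ∫ p in annulus, f p = 0 := by
  rw [setIntegral_congr_fun measurableSet_annulus hf]
  calc ∫ p in annulus, 2 * cAnn - cAnn ^ 2 / (p.1 ^ 2 + p.2 ^ 2)
      = π • ∫ s in Icc (1 : ℝ) 16, (2 * cAnn - cAnn ^ 2 / s) :=
        setIntegral_preimage_Icc_comp_sq_add_sq (fun s => 2 * cAnn - cAnn ^ 2 / s) zero_le_one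
    _ = 0 := by rw [integral_Icc_two_mul_cAnn_sub_cAnn_sq_div, smul_zero]

theorem setIntegral_annulus_dot2_etaf_eq_zero {X : ℝ × ℝ → ℝ × ℝ} (hX : X.Odd) :
    ∫ p in annulus, dot2 (X p) (etaf p) = 0 :=
  setIntegral_eq_zero_of_odd volume neg_annulus fun p => by
    simp only [dot2, etaf, hX p, Prod.fst_neg, Prod.snd_neg]; ring

theorem stmt_14 :
    (∫ p in annulus, dot2 (Gf p) (Cf p)) = 0 ∧
    (∫ p in annulus, dot2 (Gf p) (hnf p)) = 0 ∧
    (∫ p in annulus, dot2 (Gf p) (htf p)) = 0 ∧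
    (∫ p in annulus, dot2 (Gf p) (etaf p)) = 0 ∧
    (∫ p in annulus, dot2 (Cf p) (hnf p)) = 0 ∧
    (∫ p in annulus, dot2 (Cf p) (htf p)) = 0 ∧
    (∫ p in annulus, dot2 (Cf p) (etaf p)) = 0 ∧
    (∫ p in annulus, dot2 (hnf p) (htf p)) = 0 ∧
    (∫ p in annulus, dot2 (hnf p) (etaf p)) = 0 ∧
    (∫ p in annulus, dot2 (htf p) (etaf p)) = 0 := by
  have odd_G : Gf.Odd := fun p => by simp [Gf]; constructor <;> ring
  have odd_C : Cf.Odd := fun p => by simp [Cf]; constructor <;> ring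
  have odd_hn : hnf.Odd := fun p => by simp [hnf]; constructor <;> ring
  have odd_ht : htf.Odd := fun p => by simp [htf]; constructor <;> ring
  have perp_GC (p : ℝ × ℝ) : dot2 (Gf p) (Cf p) = 0 := by simp only [dot2, Gf, Cf]; ring
  have perp_Ght (p : ℝ × ℝ) : dot2 (Gf p) (htf p) = 0 := by simp only [dot2, Gf, htf]; ring
  have perp_Chn (p : ℝ × ℝ) : dot2 (Cf p) (hnf p) = 0 := by simp only [dot2, Cf, hnf]; ring
  have perp_hnht (p : ℝ × ℝ) : dot2 (hnf p) (htf p) = 0 := by simp only [dot2, hnf, htf]; ring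
  have profile_Ghn : ∀ p ∈ annulus,
      dot2 (Gf p) (hnf p) = 2 * cAnn - cAnn ^ 2 / (p.1 ^ 2 + p.2 ^ 2) := fun p hp => by
    have : p.1 ^ 2 + p.2 ^ 2 ≠ 0 := by linarith [hp.1]
    simp only [dot2, Gf, hnf]; field_simp
  have profile_Cht : ∀ p ∈ annulus,
      dot2 (Cf p) (htf p) = 2 * cAnn - cAnn ^ 2 / (p.1 ^ 2 + p.2 ^ 2) := fun p hp => by
    have : p.1 ^ 2 + p.2 ^ 2 ≠ 0 := by linarith [hp.1]
    simp only [dot2, Cf, htf]; field_simp; ring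
  exact ⟨by simp [perp_GC], setIntegral_annulus_eq_zero profile_Ghn, by simp [perp_Ght],
    setIntegral_annulus_dot2_etaf_eq_zero odd_G, by simp [perp_Chn],
    setIntegral_annulus_eq_zero profile_Cht, setIntegral_annulus_dot2_etaf_eq_zero odd_C,
    by simp [perp_hnht], setIntegral_annulus_dot2_etaf_eq_zero odd_hn,
    setIntegral_annulus_dot2_etaf_eq_zero odd_ht⟩
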